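/- arXiv:1901.06835 — 4 statements merged into one kernel-verified Lean document; each statement's English description precedes it below -/
import Mathlib

section
/- Let 0 ≤ α < n, 0 < β < 1, 0 < α+β < n, and let b ∈ Λ̇_β(ℝⁿ) with b ≥ 0. Then for every x ∈ ℝⁿ with M_α(f)(x) < ∞, one has |b(x)·M_α(f)(x) − M_α(bf)(x)| ≤ ‖b‖_{Λ̇_β} · M_{α+β}(f)(x). -/
open MeasureTheory ENNReal Set

noncomputable section

/-- An axis-parallel (closed) cube in `ℝⁿ`. -/
def IsCube (n : ℕ) (Q : Set (Fin n → ℝ)) : Prop :=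
  ∃ (c : Fin n → ℝ) (h : ℝ), 0 < h ∧ Q = Set.univ.pi fun i => Set.Icc (c i) (c i + h)

/-- The fractional maximal function `M_γ f (x) = sup_{Q ∋ x} |Q|^{γ/n-1} ∫_Q |f|`. -/
def fracMax (n : ℕ) (γ : ℝ) (f : (Fin n → ℝ) → ℝ) (x : Fin n → ℝ) : ℝ≥0∞ :=
  ⨆ (Q : Set (Fin n → ℝ)) (_ : IsCube n Q) (_ : x ∈ Q),
    volume Q ^ (γ / n - 1) * ∫⁻ y in Q, ‖f y‖₊

/-- The local fractional maximal function relative to a cube `Q₀`. -/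
def localFracMax (n : ℕ) (γ : ℝ) (Q₀ : Set (Fin n → ℝ)) (f : (Fin n → ℝ) → ℝ)
    (x : Fin n → ℝ) : ℝ≥0∞ :=
  ⨆ (Q : Set (Fin n → ℝ)) (_ : IsCube n Q) (_ : x ∈ Q) (_ : Q ⊆ Q₀),
    volume Q ^ (γ / n - 1) * ∫⁻ y in Q, ‖f y‖₊

/-- The maximal commutator `M_{α,b}`. -/
def maxComm (n : ℕ) (α : ℝ) (b f : (Fin n → ℝ) → ℝ) (x : Fin n → ℝ) : ℝ≥0∞ :=
  ⨆ (Q : Set (Fin n → ℝ)) (_ : IsCube n Q) (_ : x ∈ Q),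
    volume Q ^ (α / n - 1) * ∫⁻ y in Q, (‖b x - b y‖₊ : ℝ≥0∞) * ‖f y‖₊

/-- The nonlinear commutator `[b, M_α](f) = b · M_α(f) - M_α(b f)`. -/
def ncomm (n : ℕ) (α : ℝ) (b f : (Fin n → ℝ) → ℝ) (x : Fin n → ℝ) : ℝ :=
  b x * (fracMax n α f x).toReal - (fracMax n α (fun y => b y * f y) x).toReal

/-- Average of `b` over `Q`. -/
def cubeAvg (n : ℕ) (Q : Set (Fin n → ℝ)) (b : (Fin n → ℝ) → ℝ) : ℝ :=
  (volume Q).toReal⁻¹ * ∫ x in Q, b x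

/-!
On a cube `Q ∋ x` of side `h` the Lipschitz condition gives `|b x - b y| ≤ L h^β = L |Q|^{β/n}`
for all `y ∈ Q`, so `b x ∫_Q |f|` and `∫_Q |b f|` differ by at most `L |Q|^{β/n} ∫_Q |f|`.
Multiplying by `|Q|^{α/n-1}` turns this error into `L` times the `(α+β)`-fractional average of
`|f|` over `Q`, which is at most `L M_{α+β} f (x)`. Taking suprema over `Q` gives
`b x · M_α f ≤ M_α (b f) + L M_{α+β} f` and `M_α (b f) ≤ b x · M_α f + L M_{α+β} f`.
-/

lemma ENNReal.ofReal_abs_toReal_sub_le {a b c : ℝ≥0∞} (hab : a ≤ b + c) (hba : b ≤ a + c) :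
    ENNReal.ofReal |a.toReal - b.toReal| ≤ c := by
  rcases eq_or_ne c ∞ with rfl | hc
  · exact le_top
  have h₁ := toReal_le_add' hab (fun hb => by simpa [hb, hc] using hba) (absurd · hc)
  have h₂ := toReal_le_add' hba (fun ha => by simpa [ha, hc] using hab) (absurd · hc)
  rw [← ofReal_toReal hc]
  exact ofReal_le_ofReal (abs_sub_le_iff.2 ⟨by linarith, by linarith⟩)

section LIntegral

variable {X : Type*} [MeasurableSpace X] {μ : Measure X} {a c : ℝ≥0∞} {f g : X → ℝ≥0∞}

-- Splitting `a ≤ (a - c) + c` avoids the subadditivity of `∫⁻`, which fails for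
-- non-measurable integrands.
lemma const_mul_lintegral_le_lintegral_mul_add (ha : a ≠ ∞) (h : ∀ᵐ y ∂μ, a ≤ g y + c) :
    a * ∫⁻ y, f y ∂μ ≤ ∫⁻ y, g y * f y ∂μ + c * ∫⁻ y, f y ∂μ :=
  calc a * ∫⁻ y, f y ∂μ ≤ (a - c + c) * ∫⁻ y, f y ∂μ := by gcongr; exact le_tsub_add
    _ = ∫⁻ y, (a - c) * f y ∂μ + c * ∫⁻ y, f y ∂μ := by
      rw [add_mul, lintegral_const_mul' _ _ (ne_top_of_le_ne_top ha tsub_le_self)]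
    _ ≤ ∫⁻ y, g y * f y ∂μ + c * ∫⁻ y, f y ∂μ := by
      gcongr ?_ + _
      exact lintegral_mono_ae (h.mono fun y hy => by gcongr; exact tsub_le_iff_right.2 hy)

lemma lintegral_mul_le_const_mul (hc : c ≠ ∞) (h : ∀ᵐ y ∂μ, g y ≤ c) :
    ∫⁻ y, g y * f y ∂μ ≤ c * ∫⁻ y, f y ∂μ := by
  rw [← lintegral_const_mul' _ _ hc]
  exact lintegral_mono_ae (h.mono fun y hy => by gcongr)

end LIntegral

namespace IsCube

variable {n : ℕ} {Q : Set (Fin n → ℝ)}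

lemma measurableSet (hQ : IsCube n Q) : MeasurableSet Q := by
  obtain ⟨c, h, -, rfl⟩ := hQ
  exact MeasurableSet.univ_pi fun _ => measurableSet_Icc

lemma exists_side (hQ : IsCube n Q) :
    ∃ h > 0, volume Q = ENNReal.ofReal h ^ n ∧ ∀ y ∈ Q, ∀ z ∈ Q, dist y z ≤ h := by
  obtain ⟨c, h, hh, rfl⟩ := hQ
  refine ⟨h, hh, by rw [volume_pi_pi]; simp [Real.volume_Icc], fun y hy z hz => ?_⟩
  refine (dist_pi_le_iff hh.le).2 fun i => ?_
  have hyi := hy i (mem_univ i)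
  have hzi := hz i (mem_univ i)
  rw [mem_Icc] at hyi hzi
  rw [Real.dist_eq, abs_sub_le_iff]
  constructor <;> linarith

lemma volume_ne_zero (hQ : IsCube n Q) : volume Q ≠ 0 := by
  obtain ⟨h, hh, hvol, -⟩ := hQ.exists_side
  simp [hvol, hh]

lemma volume_ne_top (hQ : IsCube n Q) : volume Q ≠ ∞ := by
  obtain ⟨h, -, hvol, -⟩ := hQ.exists_side
  simp [hvol]

lemma ofReal_abs_sub_le {β L : ℝ} {b : (Fin n → ℝ) → ℝ} (hβ : 0 ≤ β)
    (hb : ∀ x y, |b x - b y| ≤ L * dist x y ^ β) (hQ : IsCube n Q) {x y : Fin n → ℝ}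
    (hx : x ∈ Q) (hy : y ∈ Q) :
    ENNReal.ofReal |b x - b y| ≤ ENNReal.ofReal L * volume Q ^ (β / n) := by
  obtain ⟨h, hh, hvol, hdist⟩ := hQ.exists_side
  rcases n.eq_zero_or_pos with rfl | _
  · simp [Subsingleton.elim x y]
  calc ENNReal.ofReal |b x - b y| ≤ ENNReal.ofReal (L * dist x y ^ β) := ofReal_le_ofReal (hb x y)
    _ ≤ ENNReal.ofReal L * ENNReal.ofReal (dist x y ^ β) := (ofReal_mul' (by positivity)).le
    _ ≤ ENNReal.ofReal L * ENNReal.ofReal (h ^ β) := by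
      gcongr
      exact hdist x hx y hy
    _ = ENNReal.ofReal L * volume Q ^ (β / n) := by
      rw [hvol, ← ofReal_rpow_of_pos hh, ← rpow_natCast, ← rpow_mul]
      field_simp

end IsCube

def cubeFracAvg (n : ℕ) (γ : ℝ) (Q : Set (Fin n → ℝ)) (f : (Fin n → ℝ) → ℝ) : ℝ≥0∞ :=
  volume Q ^ (γ / n - 1) * ∫⁻ y in Q, ‖f y‖₊

section FracMax

variable {n : ℕ} {γ : ℝ} {f : (Fin n → ℝ) → ℝ} {x : Fin n → ℝ} {Q : Set (Fin n → ℝ)}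

lemma cubeFracAvg_le_fracMax (hQ : IsCube n Q) (hx : x ∈ Q) :
    cubeFracAvg n γ Q f ≤ fracMax n γ f x :=
  le_iSup_of_le Q <| le_iSup_of_le hQ <| le_iSup_of_le hx le_rfl

lemma fracMax_le {A : ℝ≥0∞} (h : ∀ Q, IsCube n Q → x ∈ Q → cubeFracAvg n γ Q f ≤ A) :
    fracMax n γ f x ≤ A :=
  iSup_le fun Q => iSup_le fun hQ => iSup_le fun hx => h Q hQ hx

lemma const_mul_fracMax_le {a A : ℝ≥0∞}
    (h : ∀ Q, IsCube n Q → x ∈ Q → a * cubeFracAvg n γ Q f ≤ A) : a * fracMax n γ f x ≤ A := by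
  simp only [fracMax, ENNReal.mul_iSup]
  exact iSup_le fun Q => iSup_le fun hQ => iSup_le fun hx => h Q hQ hx

end FracMax

section Commutator

variable {n : ℕ} {α β L : ℝ} {b f : (Fin n → ℝ) → ℝ} {x : Fin n → ℝ} {Q : Set (Fin n → ℝ)}

lemma IsCube.cubeFracAvg_add (hQ : IsCube n Q) :
    cubeFracAvg n (α + β) Q f = volume Q ^ (β / n) * cubeFracAvg n α Q f := by
  simp only [cubeFracAvg]
  rw [add_div, add_sub_right_comm, rpow_add _ _ hQ.volume_ne_zero hQ.volume_ne_top]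
  ring

lemma ofReal_mul_cubeFracAvg_le (hβ : 0 ≤ β) (hb : ∀ x y, |b x - b y| ≤ L * dist x y ^ β)
    (hQ : IsCube n Q) (hx : x ∈ Q) :
    ENNReal.ofReal (b x) * cubeFracAvg n α Q f
      ≤ cubeFracAvg n α Q (fun y => b y * f y) + ENNReal.ofReal L * cubeFracAvg n (α + β) Q f := by
  have hpt : ∀ y ∈ Q, ENNReal.ofReal (b x)
      ≤ ‖b y‖₊ + ENNReal.ofReal L * volume Q ^ (β / n) := fun y hy =>
    calc ENNReal.ofReal (b x) ≤ ENNReal.ofReal (|b y| + |b x - b y|) :=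
          ofReal_le_ofReal (by linarith [le_abs_self (b y), le_abs_self (b x - b y)])
      _ = ‖b y‖₊ + ENNReal.ofReal |b x - b y| := by
          rw [ofReal_add (abs_nonneg _) (abs_nonneg _), ← Real.enorm_eq_ofReal_abs,
            enorm_eq_nnnorm]
      _ ≤ _ := by gcongr; exact hQ.ofReal_abs_sub_le hβ hb hx hy
  have hlint := const_mul_lintegral_le_lintegral_mul_add (μ := volume.restrict Q)
    (f := fun y => (‖f y‖₊ : ℝ≥0∞)) ofReal_ne_top (ae_restrict_of_forall_mem hQ.measurableSet hpt)
  calc ENNReal.ofReal (b x) * cubeFracAvg n α Q f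
      = volume Q ^ (α / n - 1) * (ENNReal.ofReal (b x) * ∫⁻ y in Q, ‖f y‖₊) := by
        rw [cubeFracAvg]; ring
    _ ≤ volume Q ^ (α / n - 1) * ((∫⁻ y in Q, ‖b y‖₊ * ‖f y‖₊)
          + ENNReal.ofReal L * volume Q ^ (β / n) * ∫⁻ y in Q, ‖f y‖₊) := by gcongr
    _ = _ := by
        rw [hQ.cubeFracAvg_add]
        simp only [cubeFracAvg, nnnorm_mul, ENNReal.coe_mul]
        ring

lemma cubeFracAvg_mul_le (hβ : 0 ≤ β) (hb : ∀ x y, |b x - b y| ≤ L * dist x y ^ β)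
    (hbx : 0 ≤ b x) (hQ : IsCube n Q) (hx : x ∈ Q) :
    cubeFracAvg n α Q (fun y => b y * f y) ≤
      ENNReal.ofReal (b x) * cubeFracAvg n α Q f + ENNReal.ofReal L * cubeFracAvg n (α + β) Q f := by
  have hpt : ∀ y ∈ Q, (‖b y‖₊ : ℝ≥0∞)
      ≤ ENNReal.ofReal (b x) + ENNReal.ofReal L * volume Q ^ (β / n) := fun y hy =>
    calc (‖b y‖₊ : ℝ≥0∞) = ENNReal.ofReal |b y| := by
          rw [← enorm_eq_nnnorm, Real.enorm_eq_ofReal_abs]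
      _ ≤ ENNReal.ofReal (b x + |b x - b y|) := ofReal_le_ofReal <| abs_le.2
          ⟨by linarith [le_abs_self (b x - b y)], by linarith [neg_le_abs (b x - b y)]⟩
      _ = ENNReal.ofReal (b x) + ENNReal.ofReal |b x - b y| := ofReal_add hbx (abs_nonneg _)
      _ ≤ _ := by gcongr; exact hQ.ofReal_abs_sub_le hβ hb hx hy
  have hfin : ENNReal.ofReal (b x) + ENNReal.ofReal L * volume Q ^ (β / n) ≠ ∞ :=
    add_ne_top.2 ⟨ofReal_ne_top, mul_ne_top ofReal_ne_top
      (rpow_ne_top_of_nonneg (div_nonneg hβ n.cast_nonneg) hQ.volume_ne_top)⟩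
  have hlint := lintegral_mul_le_const_mul (μ := volume.restrict Q)
    (f := fun y => (‖f y‖₊ : ℝ≥0∞)) hfin (ae_restrict_of_forall_mem hQ.measurableSet hpt)
  calc cubeFracAvg n α Q (fun y => b y * f y)
      = volume Q ^ (α / n - 1) * ∫⁻ y in Q, ‖b y‖₊ * ‖f y‖₊ := by
        simp only [cubeFracAvg, nnnorm_mul, ENNReal.coe_mul]
    _ ≤ volume Q ^ (α / n - 1) * ((ENNReal.ofReal (b x)
          + ENNReal.ofReal L * volume Q ^ (β / n)) * ∫⁻ y in Q, ‖f y‖₊) := by gcongr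
    _ = _ := by
        rw [hQ.cubeFracAvg_add]
        simp only [cubeFracAvg]
        ring

lemma ofReal_mul_fracMax_le (hβ : 0 ≤ β) (hb : ∀ x y, |b x - b y| ≤ L * dist x y ^ β) :
    ENNReal.ofReal (b x) * fracMax n α f x
      ≤ fracMax n α (fun y => b y * f y) x + ENNReal.ofReal L * fracMax n (α + β) f x :=
  const_mul_fracMax_le fun _ hQ hx => (ofReal_mul_cubeFracAvg_le hβ hb hQ hx).trans <| by
    gcongr <;> exact cubeFracAvg_le_fracMax hQ hx

lemma fracMax_mul_le (hβ : 0 ≤ β) (hb : ∀ x y, |b x - b y| ≤ L * dist x y ^ β) (hbx : 0 ≤ b x) :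
    fracMax n α (fun y => b y * f y) x
      ≤ ENNReal.ofReal (b x) * fracMax n α f x + ENNReal.ofReal L * fracMax n (α + β) f x :=
  fracMax_le fun _ hQ hx => (cubeFracAvg_mul_le hβ hb hbx hQ hx).trans <| by
    gcongr <;> exact cubeFracAvg_le_fracMax hQ hx

end Commutator

theorem stmt2_general (n : ℕ) (α β L : ℝ) (hβ0 : 0 < β) (b f : (Fin n → ℝ) → ℝ)
    (hb : ∀ x y, |b x - b y| ≤ L * dist x y ^ β) (hb0 : ∀ x, 0 ≤ b x) (x : Fin n → ℝ) :
    ENNReal.ofReal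
        |b x * (fracMax n α f x).toReal - (fracMax n α (fun y => b y * f y) x).toReal|
      ≤ ENNReal.ofReal L * fracMax n (α + β) f x := by
  rw [← toReal_ofReal (hb0 x), ← toReal_mul]
  exact ofReal_abs_toReal_sub_le (ofReal_mul_fracMax_le hβ0.le hb)
    (fracMax_mul_le hβ0.le hb (hb0 x))

theorem stmt2 (n : ℕ) (α β L : ℝ) (hα : 0 ≤ α) (hαn : α < n)
    (hβ0 : 0 < β) (hβ1 : β < 1) (hαβ0 : 0 < α + β) (hαβn : α + β < n)
    (b f : (Fin n → ℝ) → ℝ) (hf : LocallyIntegrable f volume)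
    (hb : ∀ x y, |b x - b y| ≤ L * dist x y ^ β) (hb0 : ∀ x, 0 ≤ b x)
    (x : Fin n → ℝ) (hfin : fracMax n α f x ≠ ⊤) :
    ENNReal.ofReal
        |b x * (fracMax n α f x).toReal - (fracMax n α (fun y => b y * f y) x).toReal|
      ≤ ENNReal.ofReal L * fracMax n (α + β) f x :=
  stmt2_general n α β L hβ0 b f hb hb0 x
end
end

section
/- Let 0 < β < 1 and b ∈ Λ̇_β(ℝⁿ) with b ≥ 0. Then for all 1 ≤ s < ∞, sup_Q |Q|^{−β/n} (|Q|^{−1} ∫_Q |b(x) − M_Q(b)(x)|^s dx)^{1/s} < ∞, where M_Q is the Hardy–Littlewood maximal function relative to the cube Q. -/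
open MeasureTheory ENNReal Set

noncomputable section

/-! On a cube `Q` of side `ℓ`, a `β`-Hölder function oscillates by at most `L ℓ^β = L |Q|^{β/n}`.
Hence every average of `b = |b|` over a subcube `R ∋ x` lies within `L |Q|^{β/n}` of `b x`, so
`|b - M_Q b| ≤ L |Q|^{β/n}` pointwise on `Q`, and the normalised `L^s` mean is at most `L`. -/

lemma volume_univ_pi_Icc_add {n : ℕ} (c : Fin n → ℝ) (h : ℝ) :
    volume (univ.pi fun i => Icc (c i) (c i + h)) = ENNReal.ofReal h ^ n := by
  rw [volume_pi_pi]
  simp [Real.volume_Icc]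

lemma dist_le_of_mem_univ_pi_Icc_add {n : ℕ} {c x y : Fin n → ℝ} {h : ℝ} (hh : 0 ≤ h)
    (hx : x ∈ univ.pi fun i => Icc (c i) (c i + h))
    (hy : y ∈ univ.pi fun i => Icc (c i) (c i + h)) : dist x y ≤ h := by
  refine (dist_pi_le_iff hh).2 fun i => ?_
  obtain ⟨hx₁, hx₂⟩ := hx i (mem_univ i)
  obtain ⟨hy₁, hy₂⟩ := hy i (mem_univ i)
  rw [Real.dist_eq, abs_le]
  constructor <;> linarith

namespace IsCube

variable {n : ℕ} {Q : Set (Fin n → ℝ)}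

lemma dist_rpow_le {β : ℝ} (hβ : 0 < β) (hQ : IsCube n Q) {x y : Fin n → ℝ}
    (hx : x ∈ Q) (hy : y ∈ Q) : dist x y ^ β ≤ (volume Q).toReal ^ (β / n) := by
  obtain ⟨c, h, hh, rfl⟩ := hQ
  rw [volume_univ_pi_Icc_add, toReal_pow, toReal_ofReal hh.le]
  rcases Nat.eq_zero_or_pos n with rfl | hn
  · rw [Subsingleton.elim x y, dist_self, Real.zero_rpow hβ.ne']
    positivity
  · have hside : (h ^ n) ^ (β / n) = h ^ β := by
      rw [← Real.rpow_natCast, ← Real.rpow_mul hh.le, mul_div_cancel₀ _ (by positivity)]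
    rw [hside]
    exact Real.rpow_le_rpow dist_nonneg (dist_le_of_mem_univ_pi_Icc_add hh.le hx hy) hβ.le

end IsCube

section Average

variable {α : Type*} [MeasurableSpace α] {μ : Measure α} {s : Set α} {f : α → ℝ≥0∞} {c : ℝ≥0∞}

lemma setLAverage_le_of_forall_le (hs : MeasurableSet s) (hμ₀ : μ s ≠ 0) (hμ : μ s ≠ ∞)
    (hf : ∀ x ∈ s, f x ≤ c) : ⨍⁻ x in s, f x ∂μ ≤ c :=
  (laverage_mono_ae (ae_restrict_of_forall_mem hs hf)).trans (setLAverage_const hμ₀ hμ c).le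

lemma le_setLAverage_of_forall_le (hs : MeasurableSet s) (hμ₀ : μ s ≠ 0) (hμ : μ s ≠ ∞)
    (hf : ∀ x ∈ s, c ≤ f x) : c ≤ ⨍⁻ x in s, f x ∂μ :=
  (setLAverage_const hμ₀ hμ c).ge.trans (laverage_mono_ae (ae_restrict_of_forall_mem hs hf))

end Average

lemma rpow_zero_div_sub_one_mul_setLIntegral {n : ℕ} (Q : Set (Fin n → ℝ))
    (g : (Fin n → ℝ) → ℝ≥0∞) :
    volume Q ^ ((0 : ℝ) / n - 1) * ∫⁻ y in Q, g y = ⨍⁻ y in Q, g y ∂volume := by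
  rw [zero_div, zero_sub, ENNReal.rpow_neg_one, setLAverage_eq, ENNReal.div_eq_inv_mul]

section LocalMaximal

variable {n : ℕ} {Q₀ : Set (Fin n → ℝ)} {f : (Fin n → ℝ) → ℝ} {x : Fin n → ℝ} {c : ℝ≥0∞}

lemma localFracMax_zero_le (hf : ∀ y ∈ Q₀, ‖f y‖ₑ ≤ c) : localFracMax n 0 Q₀ f x ≤ c := by
  refine iSup₂_le fun Q hQ => iSup₂_le fun _ hQQ₀ => ?_
  rw [rpow_zero_div_sub_one_mul_setLIntegral]
  exact setLAverage_le_of_forall_le hQ.measurableSet hQ.volume_ne_zero hQ.volume_ne_top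
    fun y hy => hf y (hQQ₀ hy)

lemma le_localFracMax_zero (hQ₀ : IsCube n Q₀) (hx : x ∈ Q₀) (hf : ∀ y ∈ Q₀, c ≤ ‖f y‖ₑ) :
    c ≤ localFracMax n 0 Q₀ f x := by
  refine le_trans ?_ (le_iSup₂_of_le Q₀ hQ₀ (le_iSup₂_of_le hx subset_rfl le_rfl))
  rw [rpow_zero_div_sub_one_mul_setLIntegral]
  exact le_setLAverage_of_forall_le hQ₀.measurableSet hQ₀.volume_ne_zero hQ₀.volume_ne_top hf

end LocalMaximal

lemma EReal.abs_coe_sub_coe_ennreal {M : ℝ≥0∞} (hM : M ≠ ∞) (a : ℝ) :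
    ((a : EReal) - M).abs = ENNReal.ofReal |a - M.toReal| := by
  rw [← EReal.coe_ennreal_toReal hM, ← EReal.coe_sub, EReal.abs_def]

lemma abs_sub_localFracMax_zero_le {n : ℕ} {β L : ℝ} (hβ : 0 < β) (hL : 0 ≤ L)
    {b : (Fin n → ℝ) → ℝ} (hb : ∀ x y, |b x - b y| ≤ L * dist x y ^ β) (hb₀ : ∀ x, 0 ≤ b x)
    {Q : Set (Fin n → ℝ)} (hQ : IsCube n Q) {x : Fin n → ℝ} (hx : x ∈ Q) :
    ((b x : EReal) - localFracMax n 0 Q b x).abs ≤ ENNReal.ofReal L * volume Q ^ (β / n) := by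
  set K := L * (volume Q).toReal ^ (β / n)
  have hK : 0 ≤ K := by positivity
  have hosc : ∀ y ∈ Q, |b y - b x| ≤ K := fun y hy =>
    (hb y x).trans (mul_le_mul_of_nonneg_left (hQ.dist_rpow_le hβ hy hx) hL)
  have hnorm : ∀ y, ‖b y‖ₑ = ENNReal.ofReal (b y) := fun y => Real.enorm_eq_ofReal (hb₀ y)
  have hupper : localFracMax n 0 Q b x ≤ ENNReal.ofReal (b x + K) :=
    localFracMax_zero_le fun y hy => by
      rw [hnorm]
      exact ENNReal.ofReal_le_ofReal (by linarith [(abs_le.1 (hosc y hy)).2])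
  have hlower : ENNReal.ofReal (b x - K) ≤ localFracMax n 0 Q b x :=
    le_localFracMax_zero hQ hx fun y hy => by
      rw [hnorm]
      exact ENNReal.ofReal_le_ofReal (by linarith [(abs_le.1 (hosc y hy)).1])
  have hM : localFracMax n 0 Q b x ≠ ∞ := ne_top_of_le_ne_top ofReal_ne_top hupper
  have hM_le : (localFracMax n 0 Q b x).toReal ≤ b x + K :=
    toReal_le_of_le_ofReal (by linarith [hb₀ x]) hupper
  have hM_ge : b x - K ≤ (localFracMax n 0 Q b x).toReal := by
    rcases le_total (b x - K) 0 with hneg | hpos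
    · exact hneg.trans toReal_nonneg
    · exact (ENNReal.ofReal_le_iff_le_toReal hM).1 hlower
  have hK_eq : ENNReal.ofReal K = ENNReal.ofReal L * volume Q ^ (β / n) := by
    rw [ENNReal.ofReal_mul hL,
      ← ENNReal.ofReal_rpow_of_pos (toReal_pos hQ.volume_ne_zero hQ.volume_ne_top),
      ofReal_toReal hQ.volume_ne_top]
  rw [EReal.abs_coe_sub_coe_ennreal hM, ← hK_eq]
  exact ENNReal.ofReal_le_ofReal (abs_le.2 ⟨by linarith, by linarith⟩)

lemma setLAverage_rpow_rpow_inv_le {α : Type*} [MeasurableSpace α] {μ : Measure α} {s : Set α}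
    {f : α → ℝ≥0∞} {c : ℝ≥0∞} {p : ℝ} (hp : 0 < p) (hs : MeasurableSet s) (hμ₀ : μ s ≠ 0)
    (hμ : μ s ≠ ∞) (hf : ∀ x ∈ s, f x ≤ c) : (⨍⁻ x in s, f x ^ p ∂μ) ^ (1 / p) ≤ c := by
  calc (⨍⁻ x in s, f x ^ p ∂μ) ^ (1 / p) ≤ (c ^ p) ^ (1 / p) := by
        gcongr
        exact setLAverage_le_of_forall_le hs hμ₀ hμ fun x hx => by gcongr; exact hf x hx
    _ = c := by rw [← ENNReal.rpow_mul, mul_one_div_cancel hp.ne', ENNReal.rpow_one]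

theorem stmt12_general (n : ℕ) (β L : ℝ) (hβ0 : 0 < β) (hL : 0 ≤ L)
    (b : (Fin n → ℝ) → ℝ) (hb : ∀ x y, |b x - b y| ≤ L * dist x y ^ β)
    (hb0 : ∀ x, 0 ≤ b x) :
    ∀ s : ℝ, 1 ≤ s → ∃ C : ℝ≥0∞, C ≠ ⊤ ∧ ∀ Q : Set (Fin n → ℝ), IsCube n Q →
      volume Q ^ (-(β / (n : ℝ))) *
        ((volume Q)⁻¹ *
          ∫⁻ x in Q, ((b x : EReal) - (localFracMax n 0 Q b x : EReal)).abs ^ s) ^ (1 / s)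
      ≤ C := by
  intro s hs
  refine ⟨ENNReal.ofReal L, ofReal_ne_top, fun Q hQ => ?_⟩
  have hv₀ := hQ.volume_ne_zero
  have hv := hQ.volume_ne_top
  calc volume Q ^ (-(β / (n : ℝ))) *
        ((volume Q)⁻¹ *
          ∫⁻ x in Q, ((b x : EReal) - (localFracMax n 0 Q b x : EReal)).abs ^ s) ^ (1 / s)
      = volume Q ^ (-(β / (n : ℝ))) *
        (⨍⁻ x in Q, ((b x : EReal) - (localFracMax n 0 Q b x : EReal)).abs ^ s ∂volume) ^ (1 / s) := by
        rw [setLAverage_eq, ENNReal.div_eq_inv_mul]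
    _ ≤ volume Q ^ (-(β / (n : ℝ))) * (ENNReal.ofReal L * volume Q ^ (β / n)) := by
        gcongr
        exact setLAverage_rpow_rpow_inv_le (by linarith) hQ.measurableSet hv₀ hv
          fun x hx => abs_sub_localFracMax_zero_le hβ0 hL hb hb0 hQ hx
    _ = ENNReal.ofReal L := by
        rw [mul_left_comm, ← ENNReal.rpow_add _ _ hv₀ hv, neg_add_cancel, ENNReal.rpow_zero,
          mul_one]

theorem stmt12 (n : ℕ) (β L : ℝ) (hβ0 : 0 < β) (hβ1 : β < 1) (hL : 0 ≤ L)
    (b : (Fin n → ℝ) → ℝ) (hb : ∀ x y, |b x - b y| ≤ L * dist x y ^ β)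
    (hb0 : ∀ x, 0 ≤ b x) :
    ∀ s : ℝ, 1 ≤ s → ∃ C : ℝ≥0∞, C ≠ ⊤ ∧ ∀ Q : Set (Fin n → ℝ), IsCube n Q →
      volume Q ^ (-(β / (n : ℝ))) *
        ((volume Q)⁻¹ *
          ∫⁻ x in Q, ((b x : EReal) - (localFracMax n 0 Q b x : EReal)).abs ^ s) ^ (1 / s)
      ≤ C :=
  stmt12_general n β L hβ0 hL b hb hb0
end
end

section
/- Let 0 < α < n, 0 < β < 1, 0 < α+β < n. If b is locally integrable and there exists s ∈ [1,∞) such that sup_Q |Q|^{−β/n}(|Q|^{−1}∫_Q |b(x) − |Q|^{−α/n}M_{α,Q}(b)(x)|^s dx)^{1/s} < ∞, then b ∈ Λ̇_β(ℝⁿ). -/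
open MeasureTheory ENNReal Set

noncomputable section

/-!
On a cube `Q`, `|Q|^{-α/n} M_{α,Q} b ≥ ⨍_Q |b| ≥ b_Q`, so `(b_Q - b)⁺ ≤ |b - |Q|^{-α/n} M_{α,Q} b|`
on `Q`. As `b - b_Q` has mean zero, `⨍_Q |b - b_Q| = 2 ⨍_Q (b_Q - b)⁺`, and Jensen's inequality
turns the hypothesis into the Campanato bound `⨍_Q |b - b_Q| ≲ ℓ(Q)^β`. Comparing averages over
nested cubes of comparable size and telescoping along dyadic scales, the averages of `b` over the
cubes centred at `x` converge as the size tends to `0`, to a value `b*(x)` within `O(r^β)` of the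
average at size `r`; hence `b*` is `β`-Hölder, and `b* = b` a.e. by Lebesgue's differentiation
theorem.
-/

open Metric Filter Topology

lemma ENNReal.ofReal_sub_le_abs_coe_sub {c t : ℝ} {a : ℝ≥0∞} (h : ENNReal.ofReal c ≤ a) :
    ENNReal.ofReal (c - t) ≤ ((t : EReal) - (a : EReal)).abs := by
  rcases eq_or_ne a ⊤ with rfl | ha
  · simp
  lift a to NNReal using ha
  have hc : c ≤ a := by simpa using (ENNReal.ofReal_le_iff_le_toReal ENNReal.coe_ne_top).1 h
  rw [show ((a : ℝ≥0∞) : EReal) = ((a : ℝ) : EReal) from rfl, ← EReal.coe_sub, EReal.abs_def]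
  exact ENNReal.ofReal_le_ofReal ((sub_le_sub_right hc t).trans (by
    rw [abs_sub_comm]; exact le_abs_self _))

section Averages

variable {X : Type*} {m : MeasurableSpace X} {μ : Measure X}

lemma enorm_average_le_laverage (f : X → ℝ) : ‖⨍ x, f x ∂μ‖ₑ ≤ ⨍⁻ x, ‖f x‖ₑ ∂μ :=
  enorm_integral_le_lintegral_enorm f

lemma laverage_le_rpow_laverage_rpow {G : X → ℝ≥0∞} (hG : AEMeasurable G μ) {s : ℝ}
    (hs : 1 ≤ s) : ⨍⁻ x, G x ∂μ ≤ (⨍⁻ x, G x ^ s ∂μ) ^ (1 / s) := by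
  -- Hölder for the normalised measure `(μ univ)⁻¹ • μ`, whose total mass is at most `1`.
  have h := eLpNorm'_le_eLpNorm'_mul_rpow_measure_univ one_pos hs
    (hG.smul_measure ((μ univ)⁻¹)).aestronglyMeasurable
  simp only [eLpNorm'_eq_lintegral_enorm, enorm_eq_self, ENNReal.rpow_one, div_one] at h
  calc ⨍⁻ x, G x ∂μ ≤ (⨍⁻ x, G x ^ s ∂μ) ^ (1 / s) * ((μ univ)⁻¹ • μ) univ ^ (1 - 1 / s) := h
    _ ≤ (⨍⁻ x, G x ^ s ∂μ) ^ (1 / s) := by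
        refine mul_le_of_le_one_right' (ENNReal.rpow_le_one prob_le_one ?_)
        rw [sub_nonneg, div_le_one (by linarith)]; exact hs

lemma ofReal_average_abs_sub_average [IsFiniteMeasure μ] {f : X → ℝ} (hf : Integrable f μ) :
    ENNReal.ofReal (⨍ x, |f x - ⨍ y, f y ∂μ| ∂μ) =
      2 * ⨍⁻ x, ENNReal.ofReal ((⨍ y, f y ∂μ) - f x) ∂μ := by
  set c := ⨍ y, f y ∂μ
  have hneg : Integrable (fun x => max (c - f x) 0) μ := ((integrable_const c).sub hf).pos_part
  have habs : ∫ x, |f x - c| ∂μ = 2 * ∫ x, max (c - f x) 0 ∂μ := by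
    have hpt : ∀ x, |f x - c| = 2 * max (c - f x) 0 + (f x - c) := fun x => by
      rcases le_total (f x) c with h | h
      · rw [abs_of_nonpos (by linarith), max_eq_left (by linarith)]; ring
      · rw [abs_of_nonneg (by linarith), max_eq_right (by linarith)]; ring
    simp_rw [hpt]
    have hfc : Integrable (fun x => f x - c) μ := hf.sub (integrable_const c)
    rw [integral_add (hneg.const_mul 2) hfc, integral_const_mul,
      integral_sub_average, add_zero]
  rw [average_eq, habs, smul_eq_mul, mul_left_comm, ← smul_eq_mul (a := (μ.real univ)⁻¹),
    ← average_eq, ENNReal.ofReal_mul zero_le_two, ENNReal.ofReal_ofNat,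
    ofReal_average hneg (Eventually.of_forall fun _ => le_max_right _ _), laverage_eq]
  simp only [ENNReal.ofReal_max, ENNReal.ofReal_zero, zero_le, max_eq_left]

end Averages

section DyadicIncrements

variable {φ : ℝ → ℝ} {A β : ℝ}

lemma abs_sub_mul_inv_two_pow_le_of_doubling (hβ : 0 < β) (hA : 0 ≤ A)
    (hφ : ∀ r R, 0 < r → r ≤ R → R ≤ 2 * r → |φ r - φ R| ≤ A * R ^ β)
    (k : ℕ) {r : ℝ} (hr : 0 < r) :
    |φ (r * 2⁻¹ ^ k) - φ r| ≤ A / (1 - 2⁻¹ ^ β) * r ^ β := by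
  have hq : (2⁻¹ : ℝ) ^ β < 1 := Real.rpow_lt_one (by norm_num) (by norm_num) hβ
  set D := A / (1 - 2⁻¹ ^ β)
  -- `D` is the fixed point of `D ↦ 2^{-β} D + A`, which makes the induction close up.
  have hD : D * 2⁻¹ ^ β + A = D := by
    simp only [D]; field_simp [(sub_pos.2 hq).ne']; ring
  induction k generalizing r with
  | zero => simpa using by positivity
  | succ k ih =>
    have hhalf : (r / 2) ^ β = r ^ β * 2⁻¹ ^ β := by
      rw [div_eq_mul_inv, Real.mul_rpow hr.le (by norm_num)]
    calc |φ (r * 2⁻¹ ^ (k + 1)) - φ r|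
        ≤ |φ (r / 2 * 2⁻¹ ^ k) - φ (r / 2)| + |φ (r / 2) - φ r| := by
          rw [show r * 2⁻¹ ^ (k + 1) = r / 2 * 2⁻¹ ^ k by ring]
          exact abs_sub_le _ _ _
      _ ≤ D * (r / 2) ^ β + A * r ^ β :=
          add_le_add (ih (by positivity)) (hφ _ _ (by positivity) (by linarith) (by linarith))
      _ = D * r ^ β := by rw [hhalf]; linear_combination r ^ β * hD

lemma abs_sub_le_of_doubling (hβ : 0 < β) (hA : 0 ≤ A)
    (hφ : ∀ r R, 0 < r → r ≤ R → R ≤ 2 * r → |φ r - φ R| ≤ A * R ^ β)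
    {r' r : ℝ} (hr' : 0 < r') (hr'r : r' ≤ r) :
    |φ r' - φ r| ≤ (A / (1 - 2⁻¹ ^ β) + A) * r ^ β := by
  obtain ⟨k, hk, hk'⟩ := exists_nat_pow_near ((one_le_div hr').2 hr'r) one_lt_two
  set ρ := r * 2⁻¹ ^ k
  have hρ : r' ≤ ρ := by
    simp only [ρ, inv_pow]; rw [le_mul_inv_iff₀ (by positivity)]
    rw [le_div_iff₀ hr'] at hk; linarith
  have hρ' : ρ ≤ 2 * r' := by
    simp only [ρ, inv_pow]; rw [mul_inv_le_iff₀ (by positivity)]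
    rw [div_lt_iff₀ hr', pow_succ] at hk'; linarith
  have hρr : ρ ≤ r := mul_le_of_le_one_right (by linarith) (pow_le_one₀ (by norm_num) (by norm_num))
  have hρβ : ρ ^ β ≤ r ^ β := Real.rpow_le_rpow (by linarith) hρr hβ.le
  calc |φ r' - φ r| ≤ |φ r' - φ ρ| + |φ ρ - φ r| := abs_sub_le _ _ _
    _ ≤ A * r ^ β + A / (1 - 2⁻¹ ^ β) * r ^ β := by
        gcongr
        · exact (hφ _ _ hr' hρ hρ').trans (by gcongr)
        · exact abs_sub_mul_inv_two_pow_le_of_doubling hβ hA hφ k (hr'.trans_le (hρ.trans hρr))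
    _ = _ := by ring

lemma exists_tendsto_nhdsGT_zero_of_doubling (hβ : 0 < β) (hA : 0 ≤ A)
    (hφ : ∀ r R, 0 < r → r ≤ R → R ≤ 2 * r → |φ r - φ R| ≤ A * R ^ β) :
    ∃ L, Tendsto φ (𝓝[>] 0) (𝓝 L) ∧
      ∀ r, 0 < r → |L - φ r| ≤ (A / (1 - 2⁻¹ ^ β) + A) * r ^ β := by
  set c := A / (1 - 2⁻¹ ^ β) + A
  have hpow : Tendsto (fun k : ℕ => (2⁻¹ : ℝ) ^ k) atTop (𝓝[>] 0) :=
    tendsto_nhdsWithin_of_tendsto_nhds_of_eventually_within _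
      (tendsto_pow_atTop_nhds_zero_of_lt_one (by norm_num) (by norm_num))
      (Eventually.of_forall fun k => by simp only [mem_Ioi]; positivity)
  have hcauchy : CauchySeq fun k : ℕ => φ (2⁻¹ ^ k) := by
    refine cauchySeq_of_le_geometric (2⁻¹ ^ β) A
      (Real.rpow_lt_one (by norm_num) (by norm_num) hβ) fun k => ?_
    have hk : (0 : ℝ) < 2⁻¹ ^ k := by positivity
    rw [Real.dist_eq, abs_sub_comm, pow_succ, Real.rpow_pow_comm (by norm_num)]
    exact hφ _ _ (by positivity) (by linarith) (by linarith)
  obtain ⟨L, hL⟩ := cauchySeq_tendsto_of_complete hcauchy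
  have hclose : ∀ r, 0 < r → |L - φ r| ≤ c * r ^ β := fun r hr =>
    le_of_tendsto ((hL.sub_const _).abs) <|
      ((tendsto_nhdsWithin_iff.1 hpow).1.eventually (gt_mem_nhds hr)).mono fun k hk =>
        abs_sub_le_of_doubling hβ hA hφ (pow_pos (by norm_num) k) hk.le
  refine ⟨L, ?_, hclose⟩
  have hrpow : Tendsto (fun r : ℝ => c * r ^ β) (𝓝[>] 0) (𝓝 0) := by
    simpa [Real.zero_rpow hβ.ne'] using
      ((Real.continuousAt_rpow_const 0 β (Or.inr hβ.le)).tendsto.const_mul c).mono_left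
        nhdsWithin_le_nhds
  refine tendsto_iff_norm_sub_tendsto_zero.2 (squeeze_zero' (Eventually.of_forall fun _ =>
    norm_nonneg _) ?_ hrpow)
  filter_upwards [self_mem_nhdsWithin] with r hr
  rw [Real.norm_eq_abs, abs_sub_comm]
  exact hclose r hr

end DyadicIncrements

section MeanOscillation

variable {ι : Type*} [Fintype ι]

/-- Balls in `ι → ℝ` are for the sup metric: `closedBall x r` is the cube of side `2 r`. -/
def HasMeanOscillationBound (b : (ι → ℝ) → ℝ) (K β : ℝ) : Prop :=
  ∀ (x : ι → ℝ) (r : ℝ), 0 < r →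
    ⨍ y in closedBall x r, |b y - ⨍ z in closedBall x r, b z| ≤ K * r ^ β

def preciseRep (b : (ι → ℝ) → ℝ) (x : ι → ℝ) : ℝ :=
  limUnder (𝓝[>] 0) fun r => ⨍ y in closedBall x r, b y

variable {b : (ι → ℝ) → ℝ} {K β : ℝ}

lemma ae_eq_preciseRep (hb : LocallyIntegrable b volume) :
    b =ᵐ[volume] preciseRep b := by
  filter_upwards [IsUnifLocDoublingMeasure.ae_tendsto_average volume hb 1] with x hx
  refine (hx (fun _ => x) id tendsto_id ?_).limUnder_eq.symm
  exact eventually_nhdsWithin_of_forall fun r hr => by simpa using hr.le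

lemma HasMeanOscillationBound.nonneg (h : HasMeanOscillationBound b K β) : 0 ≤ K := by
  have h1 := h 0 1 one_pos
  rw [Real.one_rpow, mul_one] at h1
  refine le_trans ?_ h1
  rw [setAverage_eq]
  exact smul_nonneg (by positivity) (integral_nonneg fun _ => abs_nonneg _)

lemma volume_real_pi_closedBall (x : ι → ℝ) {r : ℝ} (hr : 0 ≤ r) :
    volume.real (closedBall x r) = (2 * r) ^ Fintype.card ι := by
  rw [measureReal_def, Real.volume_pi_closedBall x hr, ENNReal.toReal_ofReal (by positivity)]

lemma HasMeanOscillationBound.abs_setAverage_sub_setAverage_le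
    (h : HasMeanOscillationBound b K β) (hb : LocallyIntegrable b volume)
    {x y : ι → ℝ} {r R : ℝ} (hr : 0 < r) (hrR : r ≤ R) (hR : R ≤ 2 * r)
    (hsub : closedBall y r ⊆ closedBall x R) :
    |(⨍ z in closedBall y r, b z) - ⨍ z in closedBall x R, b z| ≤
      2 ^ Fintype.card ι * K * R ^ β := by
  set c := ⨍ z in closedBall x R, b z
  have hv : 0 < volume.real (closedBall y r) := by
    rw [volume_real_pi_closedBall y hr.le]; positivity
  have hV : volume.real (closedBall x R) ≤ 2 ^ Fintype.card ι * volume.real (closedBall y r) := by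
    rw [volume_real_pi_closedBall x (hr.le.trans hrR), volume_real_pi_closedBall y hr.le,
      ← mul_pow]
    gcongr; linarith
  have hV0 : 0 < volume.real (closedBall x R) :=
    hv.trans_le (measureReal_mono hsub measure_closedBall_lt_top.ne)
  set v := volume.real (closedBall y r)
  set V := volume.real (closedBall x R)
  have hconst : ∀ (z : ι → ℝ) (ρ : ℝ), IntegrableOn (fun _ => c) (closedBall z ρ) volume :=
    fun _ _ => integrableOn_const measure_closedBall_lt_top.ne
  have hint : IntegrableOn (fun z => |b z - c|) (closedBall x R) volume :=
    ((hb.integrableOn_isCompact (isCompact_closedBall x R)).sub (hconst x R)).abs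
  have hosc : V⁻¹ * ∫ z in closedBall x R, |b z - c| ≤ K * R ^ β := by
    have := h x R (hr.trans_le hrR)
    rwa [setAverage_eq, smul_eq_mul] at this
  calc |(⨍ z in closedBall y r, b z) - c|
      = |v⁻¹ * ∫ z in closedBall y r, (b z - c)| := by
        rw [integral_sub (hb.integrableOn_isCompact (isCompact_closedBall y r)) (hconst y r),
          setIntegral_const, setAverage_eq, smul_eq_mul, smul_eq_mul, mul_sub,
          inv_mul_cancel_left₀ hv.ne']
    _ ≤ v⁻¹ * ∫ z in closedBall y r, |b z - c| := by
        rw [abs_mul, abs_of_pos (inv_pos.2 hv)]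
        gcongr
        exact abs_integral_le_integral_abs
    _ ≤ v⁻¹ * ∫ z in closedBall x R, |b z - c| :=
        mul_le_mul_of_nonneg_left (setIntegral_mono_set hint
          (Eventually.of_forall fun _ => abs_nonneg _) hsub.eventuallyLE) (by positivity)
    _ = v⁻¹ * V * (V⁻¹ * ∫ z in closedBall x R, |b z - c|) := by
        rw [mul_assoc, mul_inv_cancel_left₀ hV0.ne']
    _ ≤ 2 ^ Fintype.card ι * (K * R ^ β) := by
        gcongr
        rw [inv_mul_le_iff₀ hv, mul_comm]; exact hV
    _ = 2 ^ Fintype.card ι * K * R ^ β := by ring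

lemma HasMeanOscillationBound.abs_preciseRep_sub_setAverage_le
    (h : HasMeanOscillationBound b K β) (hβ : 0 < β) (hb : LocallyIntegrable b volume)
    (x : ι → ℝ) {r : ℝ} (hr : 0 < r) :
    |preciseRep b x - ⨍ y in closedBall x r, b y| ≤
      (2 ^ Fintype.card ι * K / (1 - 2⁻¹ ^ β) + 2 ^ Fintype.card ι * K) * r ^ β := by
  obtain ⟨L, hL, hclose⟩ := exists_tendsto_nhdsGT_zero_of_doubling
    (φ := fun r => ⨍ y in closedBall x r, b y) hβ (by have := h.nonneg; positivity)
    fun r R hr hrR hR => h.abs_setAverage_sub_setAverage_le hb hr hrR hR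
      (closedBall_subset_closedBall hrR)
  rw [preciseRep, hL.limUnder_eq]
  exact hclose r hr

lemma HasMeanOscillationBound.abs_preciseRep_sub_preciseRep_le
    (h : HasMeanOscillationBound b K β) (hβ : 0 < β) (hb : LocallyIntegrable b volume)
    (x y : ι → ℝ) :
    |preciseRep b x - preciseRep b y| ≤
      (2 * (2 ^ Fintype.card ι * K / (1 - 2⁻¹ ^ β) + 2 ^ Fintype.card ι * K) +
        2 ^ Fintype.card ι * K) * 2 ^ β * dist x y ^ β := by
  set A := 2 ^ Fintype.card ι * K
  set c := A / (1 - 2⁻¹ ^ β) + A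
  rcases eq_or_ne x y with rfl | hxy
  · simp [Real.zero_rpow hβ.ne']
  set d := dist x y
  have hd : 0 < d := dist_pos.2 hxy
  have hA : 0 ≤ A := by have := h.nonneg; positivity
  have hc : 0 ≤ c := by
    have : (2⁻¹ : ℝ) ^ β < 1 := Real.rpow_lt_one (by norm_num) (by norm_num) hβ
    have : 0 ≤ A / (1 - 2⁻¹ ^ β) := div_nonneg hA (by linarith)
    positivity
  have hsub : closedBall y d ⊆ closedBall x (2 * d) :=
    closedBall_subset_closedBall' (by rw [dist_comm]; linarith)
  have hdβ : d ^ β ≤ (2 * d) ^ β := Real.rpow_le_rpow hd.le (by linarith) hβ.le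
  calc |preciseRep b x - preciseRep b y|
      ≤ |preciseRep b x - ⨍ z in closedBall x (2 * d), b z|
        + |(⨍ z in closedBall y d, b z) - ⨍ z in closedBall x (2 * d), b z|
        + |preciseRep b y - ⨍ z in closedBall y d, b z| := by
        set a₁ := ⨍ z in closedBall y d, b z
        set a₂ := ⨍ z in closedBall x (2 * d), b z
        linarith [abs_sub_le (preciseRep b x) a₂ (preciseRep b y),
          abs_sub_le a₂ a₁ (preciseRep b y), abs_sub_comm a₂ a₁, abs_sub_comm a₁ (preciseRep b y)]
    _ ≤ c * (2 * d) ^ β + A * (2 * d) ^ β + c * d ^ β := by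
        gcongr
        · exact h.abs_preciseRep_sub_setAverage_le hβ hb x (by positivity)
        · exact h.abs_setAverage_sub_setAverage_le hb hd (by linarith) le_rfl hsub
        · exact h.abs_preciseRep_sub_setAverage_le hβ hb y hd
    _ ≤ (2 * c + A) * (2 * d) ^ β := by nlinarith [mul_le_mul_of_nonneg_left hdβ hc]
    _ = (2 * c + A) * 2 ^ β * d ^ β := by rw [Real.mul_rpow zero_le_two hd.le]; ring

end MeanOscillation

section Cubes

variable {n : ℕ} {Q : Set (Fin n → ℝ)}

lemma isCube_closedBall (x : Fin n → ℝ) {r : ℝ} (hr : 0 < r) : IsCube n (closedBall x r) := by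
  refine ⟨fun i => x i - r, 2 * r, by linarith, ?_⟩
  rw [closedBall_pi x hr.le]
  congr! 2 with i
  rw [Real.closedBall_eq_Icc]; ring_nf

lemma IsCube.measurableSet_s14 (hQ : IsCube n Q) : MeasurableSet Q := by
  obtain ⟨c, h, hh, rfl⟩ := hQ
  exact MeasurableSet.univ_pi fun _ => measurableSet_Icc

lemma IsCube.volume_ne_zero_s14 (hQ : IsCube n Q) : volume Q ≠ 0 := by
  obtain ⟨c, h, hh, rfl⟩ := hQ
  simp [Real.volume_Icc_pi, hh]

lemma IsCube.volume_ne_top_s14 (hQ : IsCube n Q) : volume Q ≠ ⊤ := by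
  obtain ⟨c, h, hh, rfl⟩ := hQ
  simp [Real.volume_Icc_pi]

lemma IsCube.laverage_enorm_le_localFracMax (hQ : IsCube n Q) (α : ℝ) (b : (Fin n → ℝ) → ℝ)
    {z : Fin n → ℝ} (hz : z ∈ Q) :
    ⨍⁻ y in Q, ‖b y‖ₑ ∂volume ≤ volume Q ^ (-(α / n)) * localFracMax n α Q b z := by
  have hQb : volume Q ^ (α / n - 1) * ∫⁻ y in Q, ‖b y‖ₑ ≤ localFracMax n α Q b z :=
    le_iSup₂_of_le Q hQ <| le_iSup₂_of_le hz subset_rfl le_rfl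
  calc ⨍⁻ y in Q, ‖b y‖ₑ ∂volume
        = volume Q ^ (-(α / n)) * (volume Q ^ (α / n - 1) * ∫⁻ y in Q, ‖b y‖ₑ) := by
        rw [setLAverage_eq, ← mul_assoc, ← ENNReal.rpow_add _ _ hQ.volume_ne_zero_s14 hQ.volume_ne_top_s14,
          show -(α / n) + (α / n - 1) = -1 by ring, ENNReal.rpow_neg_one, ENNReal.div_eq_inv_mul]
    _ ≤ _ := by gcongr

lemma IsCube.average_abs_sub_average_le (hQ : IsCube n Q)
    {α β s : ℝ} {b : (Fin n → ℝ) → ℝ} (hb : IntegrableOn b Q volume) (hs : 1 ≤ s)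
    {C : ℝ≥0∞} (hC : C ≠ ⊤)
    (hQC : volume Q ^ (-(β / (n : ℝ))) *
        ((volume Q)⁻¹ *
          ∫⁻ x in Q, ((b x : EReal) -
            ((volume Q ^ (-(α / (n : ℝ))) * localFracMax n α Q b x : ℝ≥0∞) : EReal)).abs ^ s)
          ^ (1 / s) ≤ C) :
    ⨍ x in Q, |b x - ⨍ y in Q, b y| ≤ 2 * C.toReal * volume.real Q ^ (β / n) := by
  set v := volume Q
  set F := fun x => ((b x : EReal) -
    ((v ^ (-(α / (n : ℝ))) * localFracMax n α Q b x : ℝ≥0∞) : EReal)).abs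
  set c := ⨍ y in Q, b y
  have : Fact (v < ⊤) := ⟨hQ.volume_ne_top_s14.lt_top⟩
  have hGF : ∀ x ∈ Q, ENNReal.ofReal (c - b x) ≤ F x := fun x hx =>
    ENNReal.ofReal_sub_le_abs_coe_sub <| (Real.ofReal_le_enorm c).trans <|
      (enorm_average_le_laverage b).trans (hQ.laverage_enorm_le_localFracMax α b hx)
  have hvβ : v ^ (β / n) ≠ ⊤ := ENNReal.rpow_ne_top_of_ne_zero hQ.volume_ne_zero_s14 hQ.volume_ne_top_s14
  have hbound : ENNReal.ofReal (⨍ x in Q, |b x - c|) ≤ 2 * (v ^ (β / n) * C) := calc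
    ENNReal.ofReal (⨍ x in Q, |b x - c|) = 2 * ⨍⁻ x in Q, ENNReal.ofReal (c - b x) ∂volume :=
      ofReal_average_abs_sub_average hb
    _ ≤ 2 * (⨍⁻ x in Q, ENNReal.ofReal (c - b x) ^ s ∂volume) ^ (1 / s) := by
      gcongr
      exact laverage_le_rpow_laverage_rpow
        (aemeasurable_const.sub hb.aemeasurable).ennreal_ofReal hs
    _ ≤ 2 * (⨍⁻ x in Q, F x ^ s ∂volume) ^ (1 / s) := by
      gcongr 2 * ?_ ^ _
      refine laverage_mono_ae ?_
      exact ae_restrict_of_forall_mem hQ.measurableSet_s14 fun x hx =>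
        ENNReal.rpow_le_rpow (hGF x hx) (by linarith)
    _ ≤ 2 * (v ^ (β / n) * C) := by
      gcongr
      rw [setLAverage_eq, ENNReal.div_eq_inv_mul, ← ENNReal.inv_mul_le_iff
        (ENNReal.rpow_pos (pos_iff_ne_zero.2 hQ.volume_ne_zero_s14) hQ.volume_ne_top_s14).ne' hvβ,
        ← ENNReal.rpow_neg]
      exact hQC
  refine ((ENNReal.ofReal_le_iff_le_toReal (by finiteness)).1 hbound).trans_eq ?_
  rw [ENNReal.toReal_mul, ENNReal.toReal_mul, ← ENNReal.toReal_rpow, ENNReal.toReal_ofNat,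
    measureReal_def]
  ring

end Cubes

theorem stmt14_general (n : ℕ) (α β : ℝ) (hα0 : 0 < α) (hαn : α < n)
    (hβ0 : 0 < β)
    (b : (Fin n → ℝ) → ℝ) (hb : LocallyIntegrable b volume)
    (s : ℝ) (hs : 1 ≤ s)
    (hsup : ∃ C : ℝ≥0∞, C ≠ ⊤ ∧ ∀ Q : Set (Fin n → ℝ), IsCube n Q →
      volume Q ^ (-(β / (n : ℝ))) *
        ((volume Q)⁻¹ *
          ∫⁻ x in Q, ((b x : EReal) -
            ((volume Q ^ (-(α / (n : ℝ))) * localFracMax n α Q b x : ℝ≥0∞) : EReal)).abs ^ s)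
          ^ (1 / s)
      ≤ C) :
    ∃ (L : ℝ) (g : (Fin n → ℝ) → ℝ), b =ᵐ[volume] g ∧
      ∀ x y, |g x - g y| ≤ L * dist x y ^ β := by
  obtain ⟨C, hC, hCQ⟩ := hsup
  have hn : (n : ℝ) ≠ 0 := (hα0.trans hαn).ne'
  have hosc : HasMeanOscillationBound b (2 * C.toReal * 2 ^ β) β := fun x r hr => by
    have hQ := isCube_closedBall x hr
    have := hQ.average_abs_sub_average_le (hb.integrableOn_isCompact (isCompact_closedBall x r))
      hs hC (hCQ _ hQ)
    rwa [volume_real_pi_closedBall x hr.le, Fintype.card_fin, ← Real.rpow_natCast,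
      ← Real.rpow_mul (by positivity), mul_div_cancel₀ _ hn, Real.mul_rpow zero_le_two hr.le,
      ← mul_assoc] at this
  exact ⟨_, preciseRep b, ae_eq_preciseRep hb, hosc.abs_preciseRep_sub_preciseRep_le hβ0 hb⟩

theorem stmt14 (n : ℕ) (α β : ℝ) (hα0 : 0 < α) (hαn : α < n)
    (hβ0 : 0 < β) (hβ1 : β < 1) (hαβn : α + β < n)
    (b : (Fin n → ℝ) → ℝ) (hb : LocallyIntegrable b volume)
    (s : ℝ) (hs : 1 ≤ s)
    (hsup : ∃ C : ℝ≥0∞, C ≠ ⊤ ∧ ∀ Q : Set (Fin n → ℝ), IsCube n Q →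
      volume Q ^ (-(β / (n : ℝ))) *
        ((volume Q)⁻¹ *
          ∫⁻ x in Q, ((b x : EReal) -
            ((volume Q ^ (-(α / (n : ℝ))) * localFracMax n α Q b x : ℝ≥0∞) : EReal)).abs ^ s)
          ^ (1 / s)
      ≤ C) :
    ∃ (L : ℝ) (g : (Fin n → ℝ) → ℝ), b =ᵐ[volume] g ∧
      ∀ x y, |g x - g y| ≤ L * dist x y ^ β :=
  stmt14_general n α β hα0 hαn hβ0 b hb s hs hsup
end
end

section
/- Let 0 < γ < n. If b is locally integrable and sup_Q |Q|^{−1}∫_Q |b(x) − |Q|^{−γ/n}M_{γ,Q}(b)(x)| dx < ∞, then b ∈ BMO(ℝⁿ). -/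
open MeasureTheory ENNReal Set

noncomputable section

/-!
On a cube `Q`, the single term `R = Q` of the supremum defining `M_{γ,Q}(b)` already gives
`|Q|^{-γ/n} M_{γ,Q}(b) ≥ |Q|⁻¹ ∫_Q |b| ≥ b_Q` on `Q`. For any `g ≥ b_Q`, the identity
`∫_Q |b - b_Q| = 2 ∫_Q (b_Q - b)⁺` (the mean of `b - b_Q` vanishes) and `(b_Q - b)⁺ ≤ |b - g|`
give `∫_Q |b - b_Q| ≤ 2 ∫_Q |b - g|`, which turns the hypothesis into the BMO bound with
constant `2C`.
-/

lemma EReal.ofReal_sub_le_abs_sub_coe {a v : ℝ} {c : ℝ≥0∞} (hv : ENNReal.ofReal v ≤ c) :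
    ENNReal.ofReal (v - a) ≤ ((a : EReal) - c).abs := by
  rcases eq_or_ne c ⊤ with rfl | hc
  · simp [EReal.coe_ennreal_top, EReal.sub_top]
  lift c to NNReal using hc
  have hvc : v ≤ c := by simpa using (ofReal_le_iff_le_toReal ENNReal.coe_ne_top).1 hv
  rw [EReal.coe_nnreal_eq_coe_real, ← EReal.coe_sub, EReal.abs_def]
  rw [abs_sub_comm]
  exact ofReal_le_ofReal ((sub_le_sub_right hvc a).trans (le_abs_self _))

section Average

variable {α : Type*} [MeasurableSpace α] {μ : Measure α}

lemma integral_abs_sub_average_eq [IsFiniteMeasure μ] {f : α → ℝ} (hf : Integrable f μ) :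
    ∫ x, |f x - ⨍ y, f y ∂μ| ∂μ = 2 * ∫ x, max (⨍ y, f y ∂μ - f x) 0 ∂μ := by
  have hpos : Integrable (fun x => max (⨍ y, f y ∂μ - f x) 0) μ :=
    ((integrable_const _).sub hf).pos_part
  have habs (t : ℝ) : |t| = 2 * max (-t) 0 + t := by
    rcases le_total 0 t with h | h
    · rw [max_eq_right (by linarith), abs_of_nonneg h]; ring
    · rw [max_eq_left (by linarith), abs_of_nonpos h]; ring
  simp_rw [habs (f _ - _), neg_sub]
  have hsub : Integrable (fun x => f x - ⨍ y, f y ∂μ) μ := hf.sub (integrable_const _)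
  rw [integral_add (hpos.const_mul 2) hsub, integral_const_mul,
    integral_sub_average, add_zero]

lemma ofReal_integral_abs_sub_average_le [IsFiniteMeasure μ] {f : α → ℝ} (hf : Integrable f μ)
    {g : α → ℝ≥0∞} (hg : ∀ᵐ x ∂μ, ENNReal.ofReal (⨍ y, f y ∂μ) ≤ g x) :
    ENNReal.ofReal (∫ x, |f x - ⨍ y, f y ∂μ| ∂μ) ≤ 2 * ∫⁻ x, ((f x : EReal) - g x).abs ∂μ := by
  have hpos : Integrable (fun x => max (⨍ y, f y ∂μ - f x) 0) μ :=
    ((integrable_const _).sub hf).pos_part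
  rw [integral_abs_sub_average_eq hf, ofReal_mul zero_le_two, ofReal_ofNat,
    ofReal_integral_eq_lintegral_ofReal hpos (ae_of_all _ fun x => le_max_right _ _)]
  gcongr 2 * ?_
  refine lintegral_mono_ae (hg.mono fun x hx => ?_)
  rw [ofReal_max, ofReal_zero, max_eq_left zero_le]
  exact EReal.ofReal_sub_le_abs_sub_coe hx

lemma ofReal_setAverage_le_lintegral_div (f : α → ℝ) (s : Set α) :
    ENNReal.ofReal (⨍ x in s, f x ∂μ) ≤ (∫⁻ x in s, ‖f x‖ₑ ∂μ) / μ s := by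
  calc ENNReal.ofReal (⨍ x in s, f x ∂μ) ≤ ‖⨍ x in s, f x ∂μ‖ₑ := Real.ofReal_le_enorm _
    _ = ENNReal.ofReal (μ s)⁻¹.toReal * ‖∫ x in s, f x ∂μ‖ₑ := by
        rw [setAverage_eq, enorm_smul, measureReal_def, ← toReal_inv,
          Real.enorm_eq_ofReal toReal_nonneg]
    _ ≤ (μ s)⁻¹ * ∫⁻ x in s, ‖f x‖ₑ ∂μ := by
        gcongr
        exacts [ofReal_toReal_le, enorm_integral_le_lintegral_enorm _]
    _ = _ := by rw [ENNReal.div_eq_inv_mul]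

end Average

namespace IsCube

variable {n : ℕ} {Q : Set (Fin n → ℝ)}

lemma isCompact (hQ : IsCube n Q) : IsCompact Q := by
  obtain ⟨c, h, -, rfl⟩ := hQ
  exact isCompact_univ_pi fun _ => isCompact_Icc

lemma rpow_mul_lintegral_le_localFracMax {γ : ℝ} (hQ : IsCube n Q) {x : Fin n → ℝ} (hx : x ∈ Q)
    (f : (Fin n → ℝ) → ℝ) :
    volume Q ^ (γ / n - 1) * ∫⁻ y in Q, ‖f y‖₊ ≤ localFracMax n γ Q f x :=
  le_iSup₂_of_le Q hQ <| le_iSup₂_of_le hx subset_rfl le_rfl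

lemma ofReal_setAverage_le_localFracMax {γ : ℝ} (hQ : IsCube n Q) {x : Fin n → ℝ} (hx : x ∈ Q)
    (f : (Fin n → ℝ) → ℝ) :
    ENNReal.ofReal (⨍ y in Q, f y) ≤ volume Q ^ (-(γ / n)) * localFracMax n γ Q f x := by
  have hinv_eq : (volume Q)⁻¹ = volume Q ^ (-(γ / n)) * volume Q ^ (γ / n - 1) := by
    rw [← rpow_add _ _ hQ.volume_ne_zero hQ.volume_ne_top, show -(γ / n) + (γ / n - 1) = -1 by ring,
      rpow_neg_one]
  calc ENNReal.ofReal (⨍ y in Q, f y)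
      ≤ (∫⁻ y in Q, ‖f y‖ₑ) / volume Q := ofReal_setAverage_le_lintegral_div f Q
    _ = volume Q ^ (-(γ / n)) * (volume Q ^ (γ / n - 1) * ∫⁻ y in Q, ‖f y‖₊) := by
        rw [ENNReal.div_eq_inv_mul, hinv_eq, mul_assoc]; rfl
    _ ≤ volume Q ^ (-(γ / n)) * localFracMax n γ Q f x := by
        gcongr; exact hQ.rpow_mul_lintegral_le_localFracMax hx f

end IsCube

lemma cubeAvg_eq_setAverage (n : ℕ) (Q : Set (Fin n → ℝ)) (b : (Fin n → ℝ) → ℝ) :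
    cubeAvg n Q b = ⨍ x in Q, b x := by
  rw [cubeAvg, setAverage_eq, smul_eq_mul, measureReal_def]

theorem stmt15_general (n : ℕ) (γ : ℝ)
    (b : (Fin n → ℝ) → ℝ) (hb : LocallyIntegrable b volume)
    (hsup : ∃ C : ℝ≥0∞, C ≠ ⊤ ∧ ∀ Q : Set (Fin n → ℝ), IsCube n Q →
      (volume Q)⁻¹ *
        ∫⁻ x in Q, ((b x : EReal) -
          ((volume Q ^ (-(γ / (n : ℝ))) * localFracMax n γ Q b x : ℝ≥0∞) : EReal)).abs
      ≤ C) :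
    ∃ C : ℝ, ∀ Q : Set (Fin n → ℝ), IsCube n Q →
      ∫ x in Q, |b x - cubeAvg n Q b| ≤ C * (volume Q).toReal := by
  obtain ⟨C, hC, hbound⟩ := hsup
  refine ⟨2 * C.toReal, fun Q hQ => ?_⟩
  have : IsFiniteMeasure (volume.restrict Q) := isFiniteMeasure_restrict.2 hQ.volume_ne_top
  have hosc := ofReal_integral_abs_sub_average_le (hb.integrableOn_isCompact hQ.isCompact)
    ((ae_restrict_iff' hQ.measurableSet).2 <| .of_forall fun x hx =>
      hQ.ofReal_setAverage_le_localFracMax (γ := γ) hx b)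
  have hQC := (ENNReal.inv_mul_le_iff hQ.volume_ne_zero hQ.volume_ne_top).1 (hbound Q hQ)
  have hfin : 2 * (volume Q * C) ≠ ∞ := mul_ne_top ofNat_ne_top (mul_ne_top hQ.volume_ne_top hC)
  rw [cubeAvg_eq_setAverage]
  calc ∫ x in Q, |b x - ⨍ y in Q, b y| ≤ (2 * (volume Q * C)).toReal :=
        (ofReal_le_iff_le_toReal hfin).1 (hosc.trans (by gcongr))
    _ = 2 * C.toReal * (volume Q).toReal := by simp only [toReal_mul, toReal_ofNat]; ring

theorem stmt15 (n : ℕ) (γ : ℝ) (hγ0 : 0 < γ) (hγn : γ < n)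
    (b : (Fin n → ℝ) → ℝ) (hb : LocallyIntegrable b volume)
    (hsup : ∃ C : ℝ≥0∞, C ≠ ⊤ ∧ ∀ Q : Set (Fin n → ℝ), IsCube n Q →
      (volume Q)⁻¹ *
        ∫⁻ x in Q, ((b x : EReal) -
          ((volume Q ^ (-(γ / (n : ℝ))) * localFracMax n γ Q b x : ℝ≥0∞) : EReal)).abs
      ≤ C) :
    ∃ C : ℝ, ∀ Q : Set (Fin n → ℝ), IsCube n Q →
      ∫ x in Q, |b x - cubeAvg n Q b| ≤ C * (volume Q).toReal :=
  stmt15_general n γ b hb hsup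
end
end
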